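/- arXiv:math/0304245 — 2 statements merged into one kernel-verified Lean document; each statement's English description precedes it below -/
import Mathlib

section
/- The coupled KdV–mKdV system is Hamiltonian with Hamiltonian density X := (1/2)(u² + uv² − v·v₂): applying the operator A to the Euler image of X reproduces the right-hand side of the system, i.e. A(u + (1/2)v², uv − v₂) = (f, g), where f = −u₃ + 6uu₁ − 3vv₃ − 3v₁v₂ + 3u₁v² + 6uvv₁ and g = −v₃ + 3v²v₁ + 3uv₁ + 3u₁v. -/
/-!
STATEMENT 15: The coupled KdV–mKdV system is Hamiltonian with Hamiltonian density
`X := (1/2)(u² + uv² − v·v₂)`: applying the operator `A` to the Euler image of `X`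
reproduces the right-hand side of the system, i.e. `A(u + (1/2)v², uv − v₂) = (f, g)`.
-/

open MvPolynomial

noncomputable section

/-- The polynomial algebra `R = ℚ[u₀,u₁,…,v₀,v₁,…]`; `X (.inl k)` is `u_k`,
`X (.inr k)` is `v_k`. -/
abbrev MRing : Type := MvPolynomial (ℕ ⊕ ℕ) ℚ

/-- The jet variable `u_k`. -/
def uu (k : ℕ) : MRing := X (Sum.inl k)

/-- The jet variable `v_k`. -/
def vv (k : ℕ) : MRing := X (Sum.inr k)

/-- The total derivative `D_x`: `D_x(u_k) = u_{k+1}`, `D_x(v_k) = v_{k+1}`. -/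
def Dx : Derivation ℚ MRing MRing :=
  mkDerivation ℚ fun i =>
    match i with
    | Sum.inl k => uu (k + 1)
    | Sum.inr k => vv (k + 1)

/-- The Hamiltonian operator `A` of the coupled KdV–mKdV system. -/
def Aop (φ ψ : MRing) : MRing × MRing :=
  (-Dx (Dx (Dx φ)) + 4 * uu 0 * Dx φ + 2 * uu 1 * φ + 2 * vv 0 * Dx ψ,
   2 * vv 0 * Dx φ + 2 * vv 1 * φ + Dx ψ)

/-- The right-hand side `f = −u₃ + 6uu₁ − 3vv₃ − 3v₁v₂ + 3u₁v² + 6uvv₁`. -/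
def fRhs : MRing :=
  -uu 3 + 6 * uu 0 * uu 1 - 3 * vv 0 * vv 3 - 3 * vv 1 * vv 2
    + 3 * uu 1 * vv 0 ^ 2 + 6 * uu 0 * vv 0 * vv 1

/-- The right-hand side `g = −v₃ + 3v²v₁ + 3uv₁ + 3u₁v`. -/
def gRhs : MRing :=
  -vv 3 + 3 * vv 0 ^ 2 * vv 1 + 3 * uu 0 * vv 1 + 3 * uu 1 * vv 0

lemma Dx_uu (k : ℕ) : Dx (uu k) = uu (k+1) := by
  simp [Dx, uu, mkDerivation_X]

lemma Dx_vv (k : ℕ) : Dx (vv k) = vv (k+1) := by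
  simp [Dx, vv, mkDerivation_X]

/-- `A` applied to the Euler image `(u + (1/2)v², uv − v₂)` of the Hamiltonian density
`X = (1/2)(u² + uv² − v·v₂)` reproduces the right-hand side `(f, g)` of the system. -/
theorem kdv_mkdv_is_hamiltonian_system :
    Aop (uu 0 + C (1/2 : ℚ) * vv 0 ^ 2) (uu 0 * vv 0 - vv 2) = (fRhs, gRhs) := by
  have hC : (C (1/2:ℚ) : MRing) * 2 = 1 := by
    rw [show (2:MRing) = C (2:ℚ) from (map_ofNat C 2).symm, ← C_mul]; norm_num
  have hφ1 : Dx (uu 0 + C (1/2:ℚ) * vv 0 ^ 2) = uu 1 + vv 0 * vv 1 := by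
    simp only [map_add, map_mul, Derivation.leibniz, Derivation.leibniz_pow,
      MvPolynomial.derivation_C, Dx_uu, Dx_vv, smul_eq_mul]
    linear_combination (vv 0 * vv 1) * hC
  have hφ2 : Dx (uu 1 + vv 0 * vv 1) = uu 2 + vv 1 ^ 2 + vv 0 * vv 2 := by
    simp only [map_add, Derivation.leibniz, Dx_uu, Dx_vv, smul_eq_mul]; ring
  have hφ3 : Dx (uu 2 + vv 1 ^ 2 + vv 0 * vv 2) = uu 3 + 3 * vv 1 * vv 2 + vv 0 * vv 3 := by
    simp only [map_add, Derivation.leibniz, Derivation.leibniz_pow, Dx_uu, Dx_vv,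
      smul_eq_mul]; ring
  have hψ1 : Dx (uu 0 * vv 0 - vv 2) = uu 1 * vv 0 + uu 0 * vv 1 - vv 3 := by
    simp only [map_sub, Derivation.leibniz, Dx_uu, Dx_vv, smul_eq_mul]; ring
  simp only [Aop, hφ1, hφ2, hφ3, hψ1, fRhs, gRhs, Prod.mk.injEq]
  constructor
  · linear_combination (uu 1 * vv 0 ^ 2) * hC
  · linear_combination (vv 0 ^ 2 * vv 1) * hC
end
end

section
/- The element X₆ := 12u³ + 24u²v² − 6u·u₂ + 6u·v⁴ − 30u·v·v₂ − 3u₂·v² − 8v³·v₂ + 6v·v₄ is a conserved density of the coupled KdV–mKdV system: there exists T ∈ R with D_t(X₆) = D_x(T). -/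
/-!
STATEMENT 17: The element
`X₆ := 12u³ + 24u²v² − 6u·u₂ + 6u·v⁴ − 30u·v·v₂ − 3u₂·v² − 8v³·v₂ + 6v·v₄`
is a conserved density of the coupled KdV–mKdV system: there exists `T ∈ R` with
`D_t(X₆) = D_x(T)`.
-/

open MvPolynomial

noncomputable section

/-- The total derivative `D_t`: `D_t(u_k) = D_x^k(f)`, `D_t(v_k) = D_x^k(g)`. -/
def Dt : Derivation ℚ MRing MRing :=
  mkDerivation ℚ fun i =>
    match i with
    | Sum.inl k => (⇑Dx)^[k] fRhs
    | Sum.inr k => (⇑Dx)^[k] gRhs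

/-- The density `X₆ = 12u³ + 24u²v² − 6u·u₂ + 6u·v⁴ − 30u·v·v₂ − 3u₂·v² − 8v³·v₂ + 6v·v₄`. -/
def X6 : MRing :=
  12 * uu 0 ^ 3 + 24 * uu 0 ^ 2 * vv 0 ^ 2 - 6 * uu 0 * uu 2 + 6 * uu 0 * vv 0 ^ 4
    - 30 * uu 0 * vv 0 * vv 2 - 3 * uu 2 * vv 0 ^ 2 - 8 * vv 0 ^ 3 * vv 2 + 6 * vv 0 * vv 4


lemma DxU (k : ℕ) : Dx (uu k) = uu (k + 1) := by
  simp [Dx, uu, MvPolynomial.mkDerivation_X]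

lemma DxV (k : ℕ) : Dx (vv k) = vv (k + 1) := by
  simp [Dx, vv, MvPolynomial.mkDerivation_X]

lemma DtU (k : ℕ) : Dt (uu k) = (⇑Dx)^[k] fRhs := by
  simp [Dt, uu, MvPolynomial.mkDerivation_X]

lemma DtV (k : ℕ) : Dt (vv k) = (⇑Dx)^[k] gRhs := by
  simp [Dt, vv, MvPolynomial.mkDerivation_X]

lemma Dmap_ofNat (D : Derivation ℚ MRing MRing) (n : ℕ) [n.AtLeastTwo] :
    D (OfNat.ofNat n) = 0 := by
  rw [← Nat.cast_ofNat]; exact D.map_natCast n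

lemma fIter1 : (⇑Dx)^[1] fRhs = 6 * (uu 0) * (uu 2) + 6 * (uu 0) * (vv 0) * (vv 2) + 6 * (uu 0) * (vv 1)^2 + 12 * (uu 1) * (vv 0) * (vv 1) + 6 * (uu 1)^2 + 3 * (uu 2) * (vv 0)^2 - 1 * (uu 4) - 3 * (vv 0) * (vv 4) - 6 * (vv 1) * (vv 3) - 3 * (vv 2)^2 := by
  rw [Function.iterate_one, fRhs]
  simp only [map_add, map_sub, map_neg, Derivation.leibniz, Derivation.leibniz_pow, smul_eq_mul, Derivation.map_one_eq_zero, Dmap_ofNat Dx, DxU, DxV]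
  ring

lemma fIter2 : (⇑Dx)^[2] fRhs = 6 * (uu 0) * (uu 3) + 6 * (uu 0) * (vv 0) * (vv 3) + 18 * (uu 0) * (vv 1) * (vv 2) + 18 * (uu 1) * (uu 2) + 18 * (uu 1) * (vv 0) * (vv 2) + 18 * (uu 1) * (vv 1)^2 + 18 * (uu 2) * (vv 0) * (vv 1) + 3 * (uu 3) * (vv 0)^2 - 1 * (uu 5) - 3 * (vv 0) * (vv 5) - 9 * (vv 1) * (vv 4) - 12 * (vv 2) * (vv 3) := by
  rw [Function.iterate_succ_apply', fIter1]
  simp only [map_add, map_sub, map_neg, Derivation.leibniz, Derivation.leibniz_pow, smul_eq_mul, Derivation.map_one_eq_zero, Dmap_ofNat Dx, DxU, DxV]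
  ring

lemma gIter1 : (⇑Dx)^[1] gRhs = 3 * (uu 0) * (vv 2) + 6 * (uu 1) * (vv 1) + 3 * (uu 2) * (vv 0) + 6 * (vv 0) * (vv 1)^2 + 3 * (vv 0)^2 * (vv 2) - 1 * (vv 4) := by
  rw [Function.iterate_one, gRhs]
  simp only [map_add, map_sub, map_neg, Derivation.leibniz, Derivation.leibniz_pow, smul_eq_mul, Derivation.map_one_eq_zero, Dmap_ofNat Dx, DxU, DxV]
  ring

lemma gIter2 : (⇑Dx)^[2] gRhs = 3 * (uu 0) * (vv 3) + 9 * (uu 1) * (vv 2) + 9 * (uu 2) * (vv 1) + 3 * (uu 3) * (vv 0) + 18 * (vv 0) * (vv 1) * (vv 2) + 3 * (vv 0)^2 * (vv 3) + 6 * (vv 1)^3 - 1 * (vv 5) := by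
  rw [Function.iterate_succ_apply', gIter1]
  simp only [map_add, map_sub, map_neg, Derivation.leibniz, Derivation.leibniz_pow, smul_eq_mul, Derivation.map_one_eq_zero, Dmap_ofNat Dx, DxU, DxV]
  ring

lemma gIter3 : (⇑Dx)^[3] gRhs = 3 * (uu 0) * (vv 4) + 12 * (uu 1) * (vv 3) + 18 * (uu 2) * (vv 2) + 12 * (uu 3) * (vv 1) + 3 * (uu 4) * (vv 0) + 24 * (vv 0) * (vv 1) * (vv 3) + 18 * (vv 0) * (vv 2)^2 + 3 * (vv 0)^2 * (vv 4) + 36 * (vv 1)^2 * (vv 2) - 1 * (vv 6) := by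
  rw [Function.iterate_succ_apply', gIter2]
  simp only [map_add, map_sub, map_neg, Derivation.leibniz, Derivation.leibniz_pow, smul_eq_mul, Derivation.map_one_eq_zero, Dmap_ofNat Dx, DxU, DxV]
  ring

lemma gIter4 : (⇑Dx)^[4] gRhs = 3 * (uu 0) * (vv 5) + 15 * (uu 1) * (vv 4) + 30 * (uu 2) * (vv 3) + 30 * (uu 3) * (vv 2) + 15 * (uu 4) * (vv 1) + 3 * (uu 5) * (vv 0) + 30 * (vv 0) * (vv 1) * (vv 4) + 60 * (vv 0) * (vv 2) * (vv 3) + 3 * (vv 0)^2 * (vv 5) + 90 * (vv 1) * (vv 2)^2 + 60 * (vv 1)^2 * (vv 3) - 1 * (vv 7) := by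
  rw [Function.iterate_succ_apply', gIter3]
  simp only [map_add, map_sub, map_neg, Derivation.leibniz, Derivation.leibniz_pow, smul_eq_mul, Derivation.map_one_eq_zero, Dmap_ofNat Dx, DxU, DxV]
  ring

def Tpoly : MRing :=
  - 84 * (uu 0) * (uu 1) * (vv 0) * (vv 1) - 174 * (uu 0) * (uu 2) * (vv 0)^2 + 6 * (uu 0) * (uu 4) + 66 * (uu 0) * (vv 0) * (vv 4) - 90 * (uu 0) * (vv 0)^2 * (vv 1)^2 - 300 * (uu 0) * (vv 0)^3 * (vv 2) + 18 * (uu 0) * (vv 0)^6 + 6 * (uu 0) * (vv 1) * (vv 3) + 48 * (uu 0) * (vv 2)^2 - 72 * (uu 0)^2 * (uu 2) - 282 * (uu 0)^2 * (vv 0) * (vv 2) + 126 * (uu 0)^2 * (vv 0)^4 - 12 * (uu 0)^2 * (vv 1)^2 + 180 * (uu 0)^3 * (vv 0)^2 + 54 * (uu 0)^4 - 6 * (uu 1) * (uu 3) + 42 * (uu 1) * (vv 0) * (vv 3) + 12 * (uu 1) * (vv 0)^3 * (vv 1) - 48 * (uu 1) * (vv 1) * (vv 2) + 42 * (uu 1)^2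 * (vv 0)^2 + 162 * (uu 2) * (vv 0) * (vv 2) - 39 * (uu 2) * (vv 0)^4 - 48 * (uu 2) * (vv 1)^2 + 6 * (uu 2)^2 + 48 * (uu 3) * (vv 0) * (vv 1) + 21 * (uu 4) * (vv 0)^2 + 120 * (vv 0) * (vv 1)^2 * (vv 2) - 6 * (vv 0) * (vv 6) + 120 * (vv 0)^2 * (vv 1) * (vv 3) + 195 * (vv 0)^2 * (vv 2)^2 + 35 * (vv 0)^3 * (vv 4) - 12 * (vv 0)^4 * (vv 1)^2 - 42 * (vv 0)^5 * (vv 2) + 6 * (vv 1) * (vv 5) - 30 * (vv 1)^4 - 6 * (vv 2) * (vv 4)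


set_option maxHeartbeats 4000000 in
/-- `X₆` is a conserved density of the coupled KdV–mKdV system. -/
theorem kdv_mkdv_X6_conserved : ∃ T : MRing, Dt X6 = Dx T := by
  use Tpoly
  have h0f : Dt (uu 0) = fRhs := by rw [DtU, Function.iterate_zero, id_eq]
  have h0g : Dt (vv 0) = gRhs := by rw [DtV, Function.iterate_zero, id_eq]
  have h2f : Dt (uu 2) = (⇑Dx)^[2] fRhs := DtU 2
  have h2g : Dt (vv 2) = (⇑Dx)^[2] gRhs := DtV 2
  have h4g : Dt (vv 4) = (⇑Dx)^[4] gRhs := DtV 4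
  simp only [X6, Tpoly, map_add, map_sub, map_neg, Derivation.leibniz, Derivation.leibniz_pow,
    smul_eq_mul, Derivation.map_one_eq_zero, Dmap_ofNat Dx, Dmap_ofNat Dt, h0f, h0g, h2f, h2g, h4g, fIter2, gIter2, gIter4,
    DxU, DxV]
  simp only [fRhs, gRhs]
  ring
end
end
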